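/- arXiv:2503.22207 — 3 statements merged into one kernel-verified Lean document; each statement's English description precedes it below -/
import Mathlib

section
/- Let μ ≥ 1 and c be real numbers with 1 ≤ c ≤ μ, let a, b be positive reals, and let d_1, …, d_r be nonnegative reals such that c·a > d_i and μ·b > d_i for every i, and a + b > μ·(d_1 + ⋯ + d_r). Then 2ab > d_1² + ⋯ + d_r². -/
/-! Put `m = min a b`. Every `d i` is below `μ * m` (using `c ≤ μ`), so
`∑ dᵢ² ≤ m * (μ * ∑ dᵢ) < m * (a + b) ≤ 2ab`. -/

open Finset

theorem Finset.sum_sq_le_mul_sum_of_le {ι : Type*} (s : Finset ι) {f : ι → ℝ} {M : ℝ}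
    (hf : ∀ i ∈ s, 0 ≤ f i) (hfM : ∀ i ∈ s, f i ≤ M) :
    ∑ i ∈ s, f i ^ 2 ≤ M * ∑ i ∈ s, f i := by
  rw [mul_sum]
  refine sum_le_sum fun i hi => ?_
  rw [sq]
  exact mul_le_mul_of_nonneg_right (hfM i hi) (hf i hi)

theorem min_mul_add_le_two_mul {a b : ℝ} (ha : 0 ≤ a) (hb : 0 ≤ b) :
    min a b * (a + b) ≤ 2 * a * b := by
  rcases le_total a b with hab | hab
  · rw [min_eq_left hab]; nlinarith
  · rw [min_eq_right hab]; nlinarith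

theorem stmt0_general (μ c a b : ℝ) (r : ℕ) (d : Fin r → ℝ)
    (hcμ : c ≤ μ)
    (ha : 0 < a) (hb : 0 < b)
    (hd : ∀ i, 0 ≤ d i)
    (hca : ∀ i, c * a > d i) (hμb : ∀ i, μ * b > d i)
    (hsum : a + b > μ * ∑ i, d i) :
    2 * a * b > ∑ i, (d i) ^ 2 := by
  have hm : 0 < min a b := lt_min ha hb
  have hd_le : ∀ i ∈ univ, d i ≤ μ * min a b := by
    intro i _
    rcases min_choice a b with h | h <;> rw [h]
    · exact (hca i).le.trans (mul_le_mul_of_nonneg_right hcμ ha.le)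
    · exact (hμb i).le
  calc ∑ i, d i ^ 2
      ≤ μ * min a b * ∑ i, d i := sum_sq_le_mul_sum_of_le _ (fun i _ => hd i) hd_le
    _ = min a b * (μ * ∑ i, d i) := by ring
    _ < min a b * (a + b) := mul_lt_mul_of_pos_left hsum hm
    _ ≤ 2 * a * b := min_mul_add_le_two_mul ha.le hb.le

theorem stmt0 (μ c a b : ℝ) (r : ℕ) (d : Fin r → ℝ)
    (hμ : 1 ≤ μ) (hc1 : 1 ≤ c) (hcμ : c ≤ μ)
    (ha : 0 < a) (hb : 0 < b)
    (hd : ∀ i, 0 ≤ d i)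
    (hca : ∀ i, c * a > d i) (hμb : ∀ i, μ * b > d i)
    (hsum : a + b > μ * ∑ i, d i) :
    2 * a * b > ∑ i, (d i) ^ 2 :=
  stmt0_general μ c a b r d hcμ ha hb hd hca hμb hsum
end

section
/- Let a, b, d be positive reals and r a positive integer. If a ≥ √(r+1)·d and b > (r/(√(r+1)+1))·d, then min{a − d, b} < √(2ab − r·d²). Equivalently, (min{a − d, b})² < 2ab − rd², and 2ab − rd² > 0. -/
/-!
Write `s = √(r + 1)`, so that `r = s² - 1` and `r / (s + 1) = s - 1`. If `a - d < b`, then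
`(a - d)² = 2a(a - d) - (a² - d²) ≤ 2a(a - d) - r d² < 2ab - r d²` since `a ≥ s d`. If `a - d ≥ b`,
then `2ab - r d² - b² = b(a - d - b) + b(a - s d) + (s + 1) d (b - (s - 1) d) > 0`.
-/

namespace Real

theorem div_sqrt_add_one_add_one {r : ℝ} (hr : 0 ≤ r) : r / (√(r + 1) + 1) = √(r + 1) - 1 := by
  have hsq : √(r + 1) ^ 2 = r + 1 := sq_sqrt (by linarith)
  rw [div_eq_iff (by positivity)]
  linear_combination -hsq

end Real

section SeshadriRatio

variable {a b d s : ℝ}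

theorem sub_sq_lt_of_sub_lt (hsd : 0 < s * d) (ha : s * d ≤ a) (hab : a - d < b) :
    (a - d) ^ 2 < 2 * a * b - (s ^ 2 - 1) * d ^ 2 := by
  have ha_sq : (s * d) ^ 2 ≤ a ^ 2 := pow_le_pow_left₀ hsd.le ha 2
  have ha_pos : 0 < a := hsd.trans_le ha
  calc (a - d) ^ 2 = 2 * a * (a - d) - (a ^ 2 - d ^ 2) := by ring
    _ ≤ 2 * a * (a - d) - (s ^ 2 - 1) * d ^ 2 := by nlinarith
    _ < 2 * a * b - (s ^ 2 - 1) * d ^ 2 := by nlinarith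

theorem sq_lt_of_le_sub (hd : 0 < d) (hs : 0 ≤ s) (hb_nonneg : 0 ≤ b) (ha : s * d ≤ a)
    (hb : (s - 1) * d < b) (hab : b ≤ a - d) :
    b ^ 2 < 2 * a * b - (s ^ 2 - 1) * d ^ 2 := by
  have hdecomp : 2 * a * b - (s ^ 2 - 1) * d ^ 2 - b ^ 2
      = b * (a - d - b) + b * (a - s * d) + (s + 1) * d * (b - (s - 1) * d) := by ring
  have h₁ : 0 ≤ b * (a - d - b) := mul_nonneg hb_nonneg (sub_nonneg.2 hab)
  have h₂ : 0 ≤ b * (a - s * d) := mul_nonneg hb_nonneg (sub_nonneg.2 ha)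
  have h₃ : 0 < (s + 1) * d * (b - (s - 1) * d) := by
    have : 0 < s + 1 := by linarith
    exact mul_pos (by positivity) (sub_pos.2 hb)
  linarith

theorem sq_min_sub_lt (hd : 0 < d) (hs : 1 ≤ s) (ha : s * d ≤ a) (hb : (s - 1) * d < b) :
    min (a - d) b ^ 2 < 2 * a * b - (s ^ 2 - 1) * d ^ 2 := by
  have hsd : 0 < s * d := mul_pos (by linarith) hd
  rcases lt_or_ge (a - d) b with hab | hab
  · rw [min_eq_left hab.le]
    exact sub_sq_lt_of_sub_lt hsd ha hab
  · have hb_nonneg : 0 ≤ b := (mul_nonneg (by linarith) hd.le).trans hb.le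
    rw [min_eq_right hab]
    exact sq_lt_of_le_sub hd (by linarith) hb_nonneg ha hb hab

end SeshadriRatio

theorem stmt12_general (a b d : ℝ) (r : ℕ)
    (hd : 0 < d)
    (h1 : a ≥ Real.sqrt (r + 1) * d) (h2 : b > (r / (Real.sqrt (r + 1) + 1)) * d) :
    min (a - d) b < Real.sqrt (2 * a * b - r * d ^ 2) ∧
    (min (a - d) b) ^ 2 < 2 * a * b - r * d ^ 2 ∧
    2 * a * b - r * d ^ 2 > 0 := by
  have hs : 1 ≤ √((r : ℝ) + 1) := Real.one_le_sqrt.2 (by simp)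
  have hr : √((r : ℝ) + 1) ^ 2 - 1 = r := by
    rw [Real.sq_sqrt (by positivity)]
    ring
  rw [Real.div_sqrt_add_one_add_one r.cast_nonneg] at h2
  have hsq := sq_min_sub_lt hd hs h1 h2
  rw [hr] at hsq
  exact ⟨Real.lt_sqrt_of_sq_lt hsq, hsq, (sq_nonneg _).trans_lt hsq⟩

theorem stmt12 (a b d : ℝ) (r : ℕ)
    (ha : 0 < a) (hb : 0 < b) (hd : 0 < d) (hr : 0 < r)
    (h1 : a ≥ Real.sqrt (r + 1) * d) (h2 : b > (r / (Real.sqrt (r + 1) + 1)) * d) :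
    min (a - d) b < Real.sqrt (2 * a * b - r * d ^ 2) ∧
    (min (a - d) b) ^ 2 < 2 * a * b - r * d ^ 2 ∧
    2 * a * b - r * d ^ 2 > 0 :=
  stmt12_general a b d r hd h1 h2
end

section
/- Let a, b, d be positive reals and r ≥ 3 an integer. Assume a > ((r+1)/2)·d and b > r·d. If either b ≥ (9/2)a − 2d or b ≤ 2(a − d), then min{3a − d, b} < √(2ab − r·d²). -/
/-! In the first case `(3a - d)² < 2ab - rd²` since `2ab - (3a - d)² ≥ 2ad - d² > rd²`; in the second
`b² < 2ab - rd²` since `2ab - b² = b(2a - b) ≥ 2bd > rd²`. -/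

theorem sq_three_mul_sub_lt_of_le (a b d r : ℝ) (hd : 0 < d) (hr : 0 ≤ r)
    (ha : (r + 1) / 2 * d < a) (hb : 9 / 2 * a - 2 * d ≤ b) :
    (3 * a - d) ^ 2 < 2 * a * b - r * d ^ 2 := by
  have ha₀ : 0 ≤ a := by nlinarith [mul_nonneg hr hd.le]
  nlinarith [mul_le_mul_of_nonneg_left hb ha₀, mul_pos hd (sub_pos.2 ha)]

theorem sq_lt_of_le_two_mul_sub (a b d r : ℝ) (hd : 0 < d) (hr : 0 ≤ r) (hb : r * d < b)
    (hab : b ≤ 2 * (a - d)) : b ^ 2 < 2 * a * b - r * d ^ 2 := by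
  nlinarith [mul_nonneg hr hd.le]

theorem stmt14_general (a b d : ℝ) (r : ℕ)
    (hd : 0 < d)
    (h1 : a > ((r + 1) / 2) * d) (h2 : b > r * d)
    (h3 : b ≥ (9 / 2) * a - 2 * d ∨ b ≤ 2 * (a - d)) :
    min (3 * a - d) b < Real.sqrt (2 * a * b - r * d ^ 2) := by
  rcases h3 with h | h
  · exact (min_le_left _ _).trans_lt <|
      Real.lt_sqrt_of_sq_lt (sq_three_mul_sub_lt_of_le a b d r hd r.cast_nonneg h1 h)
  · exact (min_le_right _ _).trans_lt <|
      Real.lt_sqrt_of_sq_lt (sq_lt_of_le_two_mul_sub a b d r hd r.cast_nonneg h2 h)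

theorem stmt14 (a b d : ℝ) (r : ℕ)
    (ha : 0 < a) (hb : 0 < b) (hd : 0 < d) (hr : 3 ≤ r)
    (h1 : a > ((r + 1) / 2) * d) (h2 : b > r * d)
    (h3 : b ≥ (9 / 2) * a - 2 * d ∨ b ≤ 2 * (a - d)) :
    min (3 * a - d) b < Real.sqrt (2 * a * b - r * d ^ 2) :=
  stmt14_general a b d r hd h1 h2 h3
end
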